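/- arXiv:1910.10673 — 2 statements merged into one kernel-verified Lean document; each statement's English description precedes it below -/
import Mathlib

section
/- Let X be a nonempty set, f, g : X → ℝ, A ⊆ ℝ, and define the parametric optimal value J*(a) = inf { f(x) : x ∈ X, a − g(x) ∈ A }. Then for every ξ ∈ ℝ, the Fenchel conjugate satisfies J*^c(ξ) = δ_A^c(ξ) − inf_{x ∈ X} { f(x) − ξ·g(x) }. -/
/-!
Conjugation turns the infimum over `x` into a supremum of conjugates, and the substitution
`b = a - g x` shows that the conjugate of `a ↦ f x + δ_A (a - g x)` is `δ_A^c ξ + ξ g x - f x`.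
No finiteness assumptions are needed because `y ↦ x + y` preserves all suprema in `EReal`,
also for `x = ⊥` (where it is constant) and `x = ⊤` (where it only distinguishes `⊥` from the rest).
-/

open Classical in
noncomputable def indicatorFn (A : Set ℝ) (a : ℝ) : EReal :=
  if a ∈ A then 0 else ⊤

noncomputable def fenchelConj (h : ℝ → EReal) (ξ : ℝ) : EReal :=
  ⨆ a : ℝ, ((ξ * a : ℝ) : EReal) - h a

namespace EReal
variable {ι : Sort*}

theorem neg_iInf (f : ι → EReal) : -(⨅ i, f i) = ⨆ i, -f i :=
  negOrderIso.map_iInf f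

theorem add_iSup (x : EReal) (f : ι → EReal) : x + ⨆ i, f i = ⨆ i, x + f i := by
  refine le_antisymm ?_ (iSup_le fun i => add_le_add_right (le_iSup f i) x)
  induction x using EReal.rec with
  | bot => simp
  | coe r =>
    rw [add_comm, ← le_sub_iff_add_le (.inl (coe_ne_bot r)) (.inl (coe_ne_top r))]
    refine iSup_le fun i => (le_sub_iff_add_le (.inl (coe_ne_bot r)) (.inl (coe_ne_top r))).2 ?_
    rw [add_comm]
    exact le_iSup (fun i => (r : EReal) + f i) i
  | top =>
    obtain h | ⟨i, hi⟩ : (∀ i, f i = ⊥) ∨ ∃ i, f i ≠ ⊥ := forall_or_exists_not _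
    · simp [h]
    · exact le_iSup_of_le i (by rw [top_add_of_ne_bot hi]; exact le_top)

theorem iSup_add (f : ι → EReal) (x : EReal) : (⨆ i, f i) + x = ⨆ i, f i + x := by
  simp only [add_comm _ x, add_iSup]

theorem sub_iInf (x : EReal) (f : ι → EReal) : x - ⨅ i, f i = ⨆ i, x - f i := by
  simp only [sub_eq_add_neg, neg_iInf, add_iSup]

end EReal

theorem fenchelConj_iInf {ι : Sort*} (h : ι → ℝ → EReal) (ξ : ℝ) :
    fenchelConj (fun a => ⨅ i, h i a) ξ = ⨆ i, fenchelConj (h i) ξ := by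
  simp only [fenchelConj, EReal.sub_iInf]
  exact iSup_comm

theorem fenchelConj_const_add_comp_sub (h : ℝ → EReal) (c b ξ : ℝ) :
    fenchelConj (fun a => (c : EReal) + h (a - b)) ξ
      = fenchelConj h ξ + ((ξ * b - c : ℝ) : EReal) := by
  have shift : ∀ a : ℝ, ((ξ * a : ℝ) : EReal) - ((c : EReal) + h (a - b))
      = (((ξ * (a - b) : ℝ) : EReal) - h (a - b)) + ((ξ * b - c : ℝ) : EReal) := by
    intro a
    rw [show ξ * a = ξ * (a - b) + ξ * b by ring, EReal.coe_add, EReal.coe_sub, sub_eq_add_neg,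
      EReal.neg_add (.inl (EReal.coe_ne_bot c)) (.inl (EReal.coe_ne_top c)),
      sub_eq_add_neg (-(c : EReal)), add_comm (-(c : EReal)),
      add_add_add_comm, ← sub_eq_add_neg, ← sub_eq_add_neg]
  simp only [fenchelConj, shift, ← EReal.iSup_add]
  congr 1
  exact (Equiv.subRight b).iSup_comp (g := fun a => ((ξ * a : ℝ) : EReal) - h a)

theorem fenchelConj_parametric_value_general
    {X : Type*} (f g : X → ℝ) (A : Set ℝ) (ξ : ℝ) :
    fenchelConj (fun a => ⨅ x : X, ((f x : EReal) + indicatorFn A (a - g x))) ξ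
      = fenchelConj (indicatorFn A) ξ
        - ⨅ x : X, ((f x - ξ * g x : ℝ) : EReal) := by
  rw [fenchelConj_iInf, EReal.sub_iInf]
  refine iSup_congr fun x => ?_
  rw [fenchelConj_const_add_comp_sub, ← neg_sub (f x), EReal.coe_neg, ← sub_eq_add_neg]

/-- Conjugate of the parametric optimal value
`J*(a) = inf {f(x) : x ∈ X, a - g(x) ∈ A}`, interpreted as
`inf_x (f x + δ_A (a - g x))`. -/
theorem fenchelConj_parametric_value
    {X : Type*} [Nonempty X] (f g : X → ℝ) (A : Set ℝ) (ξ : ℝ) :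
    fenchelConj (fun a => ⨅ x : X, ((f x : EReal) + indicatorFn A (a - g x))) ξ
      = fenchelConj (indicatorFn A) ξ
        - ⨅ x : X, ((f x - ξ * g x : ℝ) : EReal) :=
  fenchelConj_parametric_value_general f g A ξ
end

section
/- Revenue adequacy identity: Suppose real vectors Λᵖ, Λ^q ∈ ℝⁿ, nonnegative multipliers μ ∈ ℝ₊^m, μ̄ᵛ, μ̲ᵛ ∈ ℝ₊ⁿ, a vector V ∈ ℂⁿ, and Hermitian matrices Φ_k, Ψ_k, Φ_{kℓ} satisfy the stationarity condition [Σ_k Λᵖ_k Φ_k + Σ_k Λ^q_k Ψ_k + Σ_{kℓ} μ_{kℓ} Φ_{kℓ} + Σ_k (μ̄ᵛ_k − μ̲ᵛ_k) e_k e_kᵀ] V = 0, and complementary slackness μ_{kℓ}(V^H Φ_{kℓ} V − f_{kℓ}) = 0, μ̄ᵛ_k(V^H e_k e_k^H V − v̄_k²) = 0, μ̲ᵛ_k(V^H e_k e_k^H V − v̲_k²) = 0 for all k, kℓ. If p^D_k − p^G_k = −V^H Φ_k V and q^D_k − q^G_k = −V^H Ψ_k V for all k, then the merchandising surplus MS :=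 Σ_k Λᵖ_k(p^D_k − p^G_k) + Σ_k Λ^q_k(q^D_k − q^G_k) equals Σ_{kℓ} μ_{kℓ} f_{kℓ} + Σ_k μ̄ᵛ_k v̄_k² − Σ_k μ̲ᵛ_k v̲_k². -/
open Matrix

/-! Multiplying the stationarity condition on the left by `Vᴴ` turns every matrix in it into its
quadratic form `Vᴴ A V`. Power balance identifies the `Φ_k`, `Ψ_k` forms with the net injections,
and complementary slackness replaces `μ_{kℓ} Vᴴ Φ_{kℓ} V` by `μ_{kℓ} f_{kℓ}` and `μ̄ᵛ_k |V_k|²`,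
`μ̲ᵛ_k |V_k|²` by `μ̄ᵛ_k v̄_k²`, `μ̲ᵛ_k v̲_k²`; the resulting scalar identity is the claim. -/

theorem dotProduct_sum_smul_mulVec {ι m n α : Type*} [Fintype m] [Fintype n] [CommSemiring α]
    (u : m → α) (s : Finset ι) (c : ι → α) (A : ι → Matrix m n α) (v : n → α) :
    u ⬝ᵥ (∑ i ∈ s, c i • A i) *ᵥ v = ∑ i ∈ s, c i * (u ⬝ᵥ A i *ᵥ v) := by
  simp only [sum_mulVec, smul_mulVec, dotProduct_sum, dotProduct_smul, smul_eq_mul]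

theorem dotProduct_single_mulVec {m n α : Type*} [Fintype m] [Fintype n] [DecidableEq m]
    [DecidableEq n] [CommSemiring α] (u : m → α) (i : m) (j : n) (c : α) (v : n → α) :
    u ⬝ᵥ single i j c *ᵥ v = u i * (c * v j) := by
  rw [single_mulVec, ← Pi.single, dotProduct_single]

theorem Complex.star_dotProduct_single_one_mulVec {n : Type*} [Fintype n] [DecidableEq n]
    (v : n → ℂ) (k : n) : star v ⬝ᵥ single k k 1 *ᵥ v = normSq (v k) := by
  rw [dotProduct_single_mulVec, one_mul, normSq_eq_conj_mul_self]
  rfl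

theorem merchandising_surplus_identity_general {n m : ℕ}
    (Φ Ψ : Fin n → Matrix (Fin n) (Fin n) ℂ)
    (Φl : Fin m → Matrix (Fin n) (Fin n) ℂ)
    (Λp Λq : Fin n → ℝ) (μ : Fin m → ℝ) (μbarv μlowv : Fin n → ℝ)
    (V : Fin n → ℂ) (f : Fin m → ℝ) (vbar vlow : Fin n → ℝ)
    (pD pG qD qG : Fin n → ℝ)
    -- stationarity condition
    (hstat :
      (∑ k, (Λp k : ℂ) • Φ k + ∑ k, (Λq k : ℂ) • Ψ k
        + ∑ l, (μ l : ℂ) • Φl l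
        + ∑ k, ((μbarv k - μlowv k : ℝ) : ℂ) • single k k (1 : ℂ)).mulVec V
        = 0)
    -- complementary slackness
    (hcsμ : ∀ l, (μ l : ℂ) * (star V ⬝ᵥ (Φl l).mulVec V - (f l : ℂ)) = 0)
    (hcsbar : ∀ k, μbarv k * (Complex.normSq (V k) - vbar k ^ 2) = 0)
    (hcslow : ∀ k, μlowv k * (Complex.normSq (V k) - vlow k ^ 2) = 0)
    -- nodal power balance
    (hp : ∀ k, ((pD k - pG k : ℝ) : ℂ) = -(star V ⬝ᵥ (Φ k).mulVec V))
    (hq : ∀ k, ((qD k - qG k : ℝ) : ℂ) = -(star V ⬝ᵥ (Ψ k).mulVec V)) :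
    ∑ k, Λp k * (pD k - pG k) + ∑ k, Λq k * (qD k - qG k)
      = ∑ l, μ l * f l + ∑ k, μbarv k * vbar k ^ 2
        - ∑ k, μlowv k * vlow k ^ 2 := by
  have hpower_p : ∀ k,
      (Λp k : ℂ) * (star V ⬝ᵥ Φ k *ᵥ V) = ((-(Λp k * (pD k - pG k)) : ℝ) : ℂ) := by
    intro k
    rw [Complex.ofReal_neg, Complex.ofReal_mul, hp]
    ring
  have hpower_q : ∀ k,
      (Λq k : ℂ) * (star V ⬝ᵥ Ψ k *ᵥ V) = ((-(Λq k * (qD k - qG k)) : ℝ) : ℂ) := by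
    intro k
    rw [Complex.ofReal_neg, Complex.ofReal_mul, hq]
    ring
  have hline : ∀ l, (μ l : ℂ) * (star V ⬝ᵥ Φl l *ᵥ V) = ((μ l * f l : ℝ) : ℂ) := by
    intro l
    push_cast
    linear_combination hcsμ l
  have hvolt : ∀ k, ((μbarv k - μlowv k : ℝ) : ℂ) * Complex.normSq (V k)
      = ((μbarv k * vbar k ^ 2 - μlowv k * vlow k ^ 2 : ℝ) : ℂ) := by
    intro k
    norm_cast
    linear_combination hcsbar k - hcslow k
  -- after these rewrites every summand is a real number cast to `ℂ`, so the identity descends to `ℝ`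
  have hpaired := congrArg (star V ⬝ᵥ ·) hstat
  simp only [add_mulVec, dotProduct_add, dotProduct_sum_smul_mulVec,
    Complex.star_dotProduct_single_one_mulVec, dotProduct_zero, hpower_p, hpower_q, hline, hvolt,
    ← Complex.ofReal_sum, ← Complex.ofReal_add, Complex.ofReal_eq_zero,
    Finset.sum_neg_distrib, Finset.sum_sub_distrib] at hpaired
  linarith

/-- Revenue adequacy identity: under stationarity, complementary slackness and
nodal power balance at a KKT point of the AC economic dispatch problem, the
merchandising surplus `MS = Σ Λᵖ(pᴰ - pᴳ) + Σ Λᑫ(qᴰ - qᴳ)` equals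
`Σ μ f + Σ μ̄ᵛ v̄² - Σ μ̲ᵛ v̲²`. -/
theorem merchandising_surplus_identity {n m : ℕ}
    (Φ Ψ : Fin n → Matrix (Fin n) (Fin n) ℂ)
    (Φl : Fin m → Matrix (Fin n) (Fin n) ℂ)
    (hΦ : ∀ k, (Φ k).IsHermitian) (hΨ : ∀ k, (Ψ k).IsHermitian)
    (hΦl : ∀ l, (Φl l).IsHermitian)
    (Λp Λq : Fin n → ℝ) (μ : Fin m → ℝ) (μbarv μlowv : Fin n → ℝ)
    (hμ : ∀ l, 0 ≤ μ l) (hμbar : ∀ k, 0 ≤ μbarv k) (hμlow : ∀ k, 0 ≤ μlowv k)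
    (V : Fin n → ℂ) (f : Fin m → ℝ) (vbar vlow : Fin n → ℝ)
    (pD pG qD qG : Fin n → ℝ)
    -- stationarity condition
    (hstat :
      (∑ k, (Λp k : ℂ) • Φ k + ∑ k, (Λq k : ℂ) • Ψ k
        + ∑ l, (μ l : ℂ) • Φl l
        + ∑ k, ((μbarv k - μlowv k : ℝ) : ℂ) • single k k (1 : ℂ)).mulVec V
        = 0)
    -- complementary slackness
    (hcsμ : ∀ l, (μ l : ℂ) * (star V ⬝ᵥ (Φl l).mulVec V - (f l : ℂ)) = 0)
    (hcsbar : ∀ k, μbarv k * (Complex.normSq (V k) - vbar k ^ 2) = 0)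
    (hcslow : ∀ k, μlowv k * (Complex.normSq (V k) - vlow k ^ 2) = 0)
    -- nodal power balance
    (hp : ∀ k, ((pD k - pG k : ℝ) : ℂ) = -(star V ⬝ᵥ (Φ k).mulVec V))
    (hq : ∀ k, ((qD k - qG k : ℝ) : ℂ) = -(star V ⬝ᵥ (Ψ k).mulVec V)) :
    ∑ k, Λp k * (pD k - pG k) + ∑ k, Λq k * (qD k - qG k)
      = ∑ l, μ l * f l + ∑ k, μbarv k * vbar k ^ 2
        - ∑ k, μlowv k * vlow k ^ 2 :=
  merchandising_surplus_identity_general Φ Ψ Φl Λp Λq μ μbarv μlowv V f vbar vlow pD pG qD qG hstat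
    hcsμ hcsbar hcslow hp hq
end
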